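/- Let K be a Hermitian matrix indexed by (Fin D_v × Fin D_h), set D = D_v·D_h, let φ = U·e₀ be a Haar-random unit vector in C^{D_v}⊗C^{D_h}, and let p₁, p₂, q₁, q₂ be natural numbers. Then E[ Tr( (Tr_h(K^{p₁}·|φ⟩⟨φ|·K^{p₂})) · (Tr_h(K^{q₁}·|φ⟩⟨φ|·K^{q₂})) ) ] = (1/(D·(D+1))) · [ Tr( (Tr_h K^{p₁+p₂})·(Tr_h K^{q₁+q₂}) ) + Tr( (Tr_v K^{q₁+p₂})·(Tr_v K^{p₁+q₂}) ) ]. -/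

import Mathlib

open Matrix BigOperators MeasureTheory
open scoped Kronecker

/-- The Borel/pi measurable-space structure on complex matrices. -/
noncomputable instance matrixMeasurableSpace {n m : Type*} : MeasurableSpace (Matrix n m ℂ) :=
  inferInstanceAs (MeasurableSpace (n → m → ℂ))

/-- The rank-one projector `|φ⟩⟨φ|` onto a vector `φ`. -/
noncomputable def proj {n : Type*} (φ : n → ℂ) : Matrix n n ℂ :=
  Matrix.of fun i j => φ i * star (φ j)

/-- Partial trace over the hidden (second) tensor factor. -/
noncomputable def trH {Dv Dh : ℕ} (M : Matrix (Fin Dv × Fin Dh) (Fin Dv × Fin Dh) ℂ) :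
    Matrix (Fin Dv) (Fin Dv) ℂ :=
  Matrix.of fun p v => ∑ q, M (p, q) (v, q)

/-- Partial trace over the visible (first) tensor factor. -/
noncomputable def trV {Dv Dh : ℕ} (M : Matrix (Fin Dv × Fin Dh) (Fin Dv × Fin Dh) ℂ) :
    Matrix (Fin Dh) (Fin Dh) ℂ :=
  Matrix.of fun q s => ∑ p, M (p, q) (p, s)

/-!
The integrand is a bilinear form evaluated at `(ρ, ρ)` with `ρ = |φ⟩⟨φ|`, so its average is
determined by the fourth moments `E[φ_i φ̄_j φ_k φ̄_l]` of a column of a Haar unitary.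
Left invariance makes this moment tensor invariant under `V ⊗ V̄ ⊗ V ⊗ V̄` for every unitary `V`.
Diagonal phase unitaries kill every moment whose indices are not paired; a unitary mixing two
coordinates `a, b` with weights of modulus `1/√2` gives `4 α_a = α_a + α_b + 4 β_ab`
(`α_a = E|φ_a|⁴`, `β_ab = E|φ_a|²|φ_b|²`), hence all `α` agree and `α = 2β`; finally `‖φ‖ = 1`
forces `β = 1/(D(D+1))`. Contracting `(δ_ij δ_kl + δ_il δ_kj)/(D(D+1))` with the partial-trace
form, the first term gives `Tr(Tr_h K^{p₁+p₂} Tr_h K^{q₁+q₂})` and the second, a swap of the two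
copies, gives `Tr(Tr_v K^{q₁+p₂} Tr_v K^{p₁+q₂})`.
-/

lemma mul_single_one_mul_apply {l m n p R : Type*} [Fintype m] [Fintype n] [DecidableEq m]
    [DecidableEq n] [CommSemiring R] (A : Matrix l m R) (B : Matrix n p R) (i : m) (k : n)
    (r : l) (c : p) : (A * single i k (1 : R) * B) r c = A r i * B k c := by
  simp [mul_apply, single_apply, ite_and, Finset.sum_ite_eq, ite_mul]

lemma proj_mulVec {n : Type*} [Fintype n] (V : Matrix n n ℂ) (v : n → ℂ) :
    proj (V *ᵥ v) = V * proj v * Vᴴ := by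
  ext i j
  simp only [proj, of_apply, mul_apply, mulVec, dotProduct, conjTranspose_apply, star_sum,
    star_mul', Finset.sum_mul, Finset.mul_sum]
  exact Finset.sum_congr rfl fun _ _ => Finset.sum_congr rfl fun _ _ => by ring

lemma diagonal_mem_unitaryGroup {n α : Type*} [Fintype n] [DecidableEq n] [CommRing α]
    [StarRing α] {d : n → α} (hd : ∀ x, star (d x) * d x = 1) :
    diagonal d ∈ unitaryGroup n α := by
  rw [mem_unitaryGroup_iff', star_eq_conjTranspose, diagonal_conjTranspose, diagonal_mul_diagonal,
    ← diagonal_one]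
  exact congrArg diagonal (funext hd)

lemma one_sub_I_div_two_mul_star : (1 - Complex.I) / 2 * star ((1 - Complex.I) / 2) = 1 / 2 := by
  rw [Complex.star_def, map_div₀, map_sub, map_one, Complex.conj_I, map_ofNat]
  linear_combination (-1 / 4 : ℂ) * Complex.I_sq

lemma smul_one_add_I_smul_mem_unitaryGroup {n : Type*} [Fintype n] [DecidableEq n]
    {S : Matrix n n ℂ} (hS : S ∈ unitaryGroup n ℂ) (hSh : star S = S) :
    ((1 - Complex.I) / 2) • (1 + Complex.I • S) ∈ unitaryGroup n ℂ := by
  have hSS : S * S = 1 := by simpa [hSh] using mem_unitaryGroup_iff.mp hS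
  rw [mem_unitaryGroup_iff, star_smul, star_add, star_one, star_smul, hSh, smul_mul_smul,
    add_mul, mul_add, mul_add, smul_mul_smul, hSS, one_sub_I_div_two_mul_star, Complex.star_def,
    Complex.conj_I]
  simp only [mul_one, one_mul, mul_neg, Complex.I_mul_I, neg_neg]
  module

section ColumnMoments

variable {n : Type*} [Fintype n] [DecidableEq n]

lemma bilin_eq_sum_single {R : Type*} [CommSemiring R]
    (Φ : Matrix n n R →ₗ[R] Matrix n n R →ₗ[R] R) (X Y : Matrix n n R) :
    Φ X Y = ∑ i, ∑ j, ∑ k, ∑ l, X i j * Y k l * Φ (single i j 1) (single k l 1) := by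
  have hsum : ∀ M : Matrix n n R, M = ∑ i, ∑ j, M i j • single i j 1 := fun M => by
    simpa [smul_single] using matrix_eq_sum_single M
  conv_lhs =>
    rw [hsum X]
    simp only [map_sum, map_smul, LinearMap.sum_apply, LinearMap.smul_apply]
    rw [hsum Y]
  simp only [map_sum, map_smul, smul_eq_mul, Finset.mul_sum]
  ring_nf

lemma measurable_unitaryGroup_apply (i j : n) :
    Measurable fun U : unitaryGroup n ℂ => (U : Matrix n n ℂ) i j :=
  (measurable_pi_apply j).comp ((measurable_pi_apply i).comp measurable_subtype_coe)

instance : MeasurableMul (unitaryGroup n ℂ) where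
  measurable_const_mul _ := .subtype_mk <| measurable_pi_lambda _ fun _ =>
    measurable_pi_lambda _ fun j => Finset.measurable_sum _ fun k _ =>
      (measurable_unitaryGroup_apply k j).const_mul _
  measurable_mul_const _ := .subtype_mk <| measurable_pi_lambda _ fun i =>
    measurable_pi_lambda _ fun _ => Finset.measurable_sum _ fun k _ =>
      (measurable_unitaryGroup_apply i k).mul_const _

def unitaryColumn (U : unitaryGroup n ℂ) (e : n) : n → ℂ := fun x => (U : Matrix n n ℂ) x e

lemma unitaryColumn_mul (V U : unitaryGroup n ℂ) (e : n) :
    unitaryColumn (V * U) e = (V : Matrix n n ℂ) *ᵥ unitaryColumn U e := by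
  ext x
  simp [unitaryColumn, mul_apply, mulVec, dotProduct]

lemma trace_proj_unitaryColumn (U : unitaryGroup n ℂ) (e : n) :
    (proj (unitaryColumn U e)).trace = 1 := by
  have h := congrFun (congrFun (UnitaryGroup.star_mul_self U) e) e
  simp only [mul_apply, star_apply, one_apply_eq] at h
  simpa [trace, proj, unitaryColumn, mul_comm] using h

lemma integrable_proj_mul_proj (μ : Measure (unitaryGroup n ℂ)) [IsFiniteMeasure μ]
    (e i j k l : n) :
    Integrable (fun U => proj (unitaryColumn U e) i j * proj (unitaryColumn U e) k l) μ := by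
  have hm : ∀ x, Measurable fun U => unitaryColumn U e x :=
    fun x => measurable_unitaryGroup_apply x e
  refine Integrable.of_bound (C := 1) ?_ (ae_of_all _ fun U => ?_)
  · simp only [proj, of_apply]
    fun_prop
  · have h := fun x => entry_norm_bound_of_unitary U.2 x e
    simp only [proj, of_apply, unitaryColumn, norm_mul, norm_star]
    exact mul_le_one₀ (mul_le_one₀ (h i) (norm_nonneg _) (h j)) (by positivity)
      (mul_le_one₀ (h k) (norm_nonneg _) (h l))

lemma exists_unitary_mulVec_apply_eq (a b : n) :
    ∃ (W : unitaryGroup n ℂ) (u v : ℂ), u * star u = 1 / 2 ∧ v * star v = 1 / 2 ∧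
      ∀ g, ((W : Matrix n n ℂ) *ᵥ g) a = u * g a + v * g b := by
  let S := (Equiv.swap a b).permMatrix ℂ
  have hSh : star S = S := by
    rw [star_eq_conjTranspose, conjTranspose_permMatrix, Equiv.swap_inv]
  have hS : S ∈ unitaryGroup n ℂ := by
    rw [mem_unitaryGroup_iff, hSh, ← permMatrix_mul, Equiv.swap_mul_self, permMatrix_one]
  refine ⟨⟨_, smul_one_add_I_smul_mem_unitaryGroup hS hSh⟩, (1 - Complex.I) / 2,
    (1 - Complex.I) / 2 * Complex.I, one_sub_I_div_two_mul_star, ?_, fun g => ?_⟩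
  · rw [star_mul', mul_mul_mul_comm, one_sub_I_div_two_mul_star, Complex.star_def, Complex.conj_I]
    simp
  · simp [S, add_mulVec, smul_mulVec, permMatrix_mulVec]
    ring

variable (μ : Measure (unitaryGroup n ℂ))

noncomputable def columnMoment (e i j k l : n) : ℂ :=
  ∫ U, proj (unitaryColumn U e) i j * proj (unitaryColumn U e) k l ∂μ

lemma columnMoment_comm_left (e i j k l : n) :
    columnMoment μ e i j k l = columnMoment μ e k j i l := by
  simp only [columnMoment, proj, of_apply]
  congr 1 with U
  ring

lemma columnMoment_comm_right (e i j k l : n) :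
    columnMoment μ e i j k l = columnMoment μ e i l k j := by
  simp only [columnMoment, proj, of_apply]
  congr 1 with U
  ring

lemma integral_bilin_proj_eq_sum [IsFiniteMeasure μ] (e : n)
    (Φ : Matrix n n ℂ →ₗ[ℂ] Matrix n n ℂ →ₗ[ℂ] ℂ) :
    ∫ U, Φ (proj (unitaryColumn U e)) (proj (unitaryColumn U e)) ∂μ =
      ∑ i, ∑ j, ∑ k, ∑ l, columnMoment μ e i j k l * Φ (single i j 1) (single k l 1) := by
  have hint := integrable_proj_mul_proj μ e
  simp_rw [bilin_eq_sum_single Φ (proj (unitaryColumn _ e))]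
  simp (disch := intros; fun_prop) only [integral_finsetSum, integral_mul_const]
  rfl

lemma sum_columnMoment_self_self [IsProbabilityMeasure μ] (e : n) :
    ∑ i, ∑ k, columnMoment μ e i i k k = 1 := by
  have h := integral_bilin_proj_eq_sum μ e
    ((LinearMap.mul ℂ ℂ).compl₁₂ (traceLinearMap n ℂ ℂ) (traceLinearMap n ℂ ℂ))
  simp only [LinearMap.compl₁₂_apply, LinearMap.mul_apply', traceLinearMap_apply,
    trace_proj_unitaryColumn, mul_one, integral_const, probReal_univ, one_smul] at h
  simp [trace, single_apply, ite_and, mul_ite, Finset.sum_ite_eq] at h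
  exact h.symm

section Invariant

variable [IsFiniteMeasure μ] [μ.IsMulLeftInvariant]

lemma columnMoment_eq_sum_unitary (V : unitaryGroup n ℂ) (e i j k l : n) :
    columnMoment μ e i j k l = ∑ x, V i x * ∑ y, star (V j y) * ∑ z, V k z * ∑ w,
      star (V l w) * columnMoment μ e x y z w := by
  let conjV : Matrix n n ℂ →ₗ[ℂ] Matrix n n ℂ :=
    LinearMap.mulLeft ℂ (V : Matrix n n ℂ) ∘ₗ LinearMap.mulRight ℂ (V : Matrix n n ℂ)ᴴ
  let Φ := (LinearMap.mul ℂ ℂ).compl₁₂ (entryLinearMap ℂ ℂ i j ∘ₗ conjV)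
    (entryLinearMap ℂ ℂ k l ∘ₗ conjV)
  have hΦ : ∀ X Y, Φ X Y = ((V : Matrix n n ℂ) * X * (V : Matrix n n ℂ)ᴴ) i j *
      ((V : Matrix n n ℂ) * Y * (V : Matrix n n ℂ)ᴴ) k l := by
    intro X Y
    simp [Φ, conjV, mul_assoc]
  calc columnMoment μ e i j k l
      = ∫ U, proj (unitaryColumn (V * U) e) i j * proj (unitaryColumn (V * U) e) k l ∂μ :=
        (integral_mul_left_eq_self _ V).symm
    _ = ∫ U, Φ (proj (unitaryColumn U e)) (proj (unitaryColumn U e)) ∂μ := by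
        simp only [hΦ, unitaryColumn_mul, proj_mulVec]
    _ = _ := by
        rw [integral_bilin_proj_eq_sum]
        simp only [hΦ, mul_single_one_mul_apply, conjTranspose_apply, Finset.mul_sum]
        refine Finset.sum_congr rfl fun x _ => Finset.sum_congr rfl fun y _ =>
          Finset.sum_congr rfl fun z _ => Finset.sum_congr rfl fun w _ => by ring

lemma columnMoment_eq_mul_of_diagonal (d : n → ℂ) (hd : ∀ x, star (d x) * d x = 1)
    (e i j k l : n) :
    columnMoment μ e i j k l = d i * star (d j) * d k * star (d l) * columnMoment μ e i j k l := by
  conv_lhs => rw [columnMoment_eq_sum_unitary μ ⟨diagonal d, diagonal_mem_unitaryGroup hd⟩]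
  simp [diagonal_apply, ite_mul, Finset.sum_ite_eq, apply_ite (starRingEnd ℂ)]
  ring

lemma columnMoment_eq_zero (e : n) {i j k l : n} (h₁ : ¬(i = j ∧ k = l)) (h₂ : ¬(i = l ∧ k = j)) :
    columnMoment μ e i j k l = 0 := by
  let d : n → n → ℂ := fun c x => if x = c then Complex.I else 1
  have hd : ∀ c x, star (d c x) * d c x = 1 := fun c x => by
    by_cases h : x = c <;> simp [d, h]
  obtain ⟨c, hc⟩ : ∃ c, d c i * star (d c j) * d c k * star (d c l) ≠ 1 := by
    by_cases hij : i = j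
    · subst hij
      have hkl : k ≠ l := fun h => h₁ ⟨rfl, h⟩
      refine ⟨l, ?_⟩
      by_cases hil : i = l <;> simp [d, hil, hkl, Complex.ext_iff]
    by_cases hil : i = l
    · subst hil
      have hkj : k ≠ j := fun h => h₂ ⟨rfl, h⟩
      exact ⟨j, by simp [d, hij, hkj, Complex.ext_iff]⟩
    refine ⟨i, ?_⟩
    by_cases hki : k = i <;> simp [d, hki, Ne.symm hij, Ne.symm hil, Complex.ext_iff]
    norm_num
  have h := columnMoment_eq_mul_of_diagonal μ (d c) (hd c) e i j k l
  exact (mul_left_eq_self₀.mp h.symm).resolve_left hc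

lemma four_mul_columnMoment_self_of_mulVec_apply (e : n) {a b : n} (hab : a ≠ b)
    (W : unitaryGroup n ℂ) {u v : ℂ} (hu : u * star u = 1 / 2) (hv : v * star v = 1 / 2)
    (hW : ∀ g, ((W : Matrix n n ℂ) *ᵥ g) a = u * g a + v * g b) :
    4 * columnMoment μ e a a a a =
      columnMoment μ e a a a a + columnMoment μ e b b b b + 4 * columnMoment μ e a a b b := by
  have hrow_star : ∀ g : n → ℂ, ∑ x, star ((W : Matrix n n ℂ) a x) * g x =
      star u * g a + star v * g b := fun g => by
    simpa [mulVec, dotProduct, star_sum, mul_comm] using congrArg star (hW (star g))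
  have hrow : ∀ g : n → ℂ, ∑ x, (W : Matrix n n ℂ) a x * g x = u * g a + v * g b := hW
  have h := columnMoment_eq_sum_unitary μ W e a a a a
  simp only [hrow, hrow_star] at h
  simp (disch := simp [hab, hab.symm]) only [columnMoment_eq_zero μ e] at h
  rw [columnMoment_comm_left μ e b b a a, columnMoment_comm_right μ e a b b a,
    columnMoment_comm_left μ e b a a b] at h
  -- `h` now reads `α_a = |u|⁴ α_a + |v|⁴ α_b + 4 |u|² |v|² β_ab`
  linear_combination 4 * h + 2 * (2 * (u * star u) + 1) * columnMoment μ e a a a a * hu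
    + 2 * (2 * (v * star v) + 1) * columnMoment μ e b b b b * hv
    + 16 * (v * star v) * columnMoment μ e a a b b * hu + 8 * columnMoment μ e a a b b * hv

lemma columnMoment_self_eq (e a b : n) : columnMoment μ e a a a a = columnMoment μ e b b b b := by
  rcases eq_or_ne a b with rfl | hab
  · rfl
  obtain ⟨W, u, v, hu, hv, hW⟩ := exists_unitary_mulVec_apply_eq (n := n) a b
  obtain ⟨W', u', v', hu', hv', hW'⟩ := exists_unitary_mulVec_apply_eq (n := n) b a
  have h := four_mul_columnMoment_self_of_mulVec_apply μ e hab W hu hv hW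
  have h' := four_mul_columnMoment_self_of_mulVec_apply μ e hab.symm W' hu' hv' hW'
  rw [columnMoment_comm_left μ e b b a a, columnMoment_comm_right μ e a b b a] at h'
  linear_combination (h - h') / 4

lemma columnMoment_self_eq_two_mul (e : n) {a b : n} (hab : a ≠ b) :
    columnMoment μ e a a a a = 2 * columnMoment μ e a a b b := by
  obtain ⟨W, u, v, hu, hv, hW⟩ := exists_unitary_mulVec_apply_eq (n := n) a b
  have h := four_mul_columnMoment_self_of_mulVec_apply μ e hab W hu hv hW
  rw [← columnMoment_self_eq μ e a b] at h
  linear_combination h / 2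

end Invariant

theorem columnMoment_eq [IsProbabilityMeasure μ] [μ.IsMulLeftInvariant] (e i j k l : n) :
    columnMoment μ e i j k l = ((Fintype.card n : ℂ) * (Fintype.card n + 1))⁻¹ *
      ((if i = j then 1 else 0) * (if k = l then 1 else 0) +
        (if i = l then 1 else 0) * (if k = j then 1 else 0)) := by
  have hpair : ∀ i k, columnMoment μ e i i k k =
      columnMoment μ e e e e e / 2 * (1 + if i = k then 1 else 0) := by
    intro i k
    rcases eq_or_ne i k with rfl | hik
    · rw [if_pos rfl, columnMoment_self_eq μ e i e]
      ring
    · have h := columnMoment_self_eq_two_mul μ e hik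
      rw [columnMoment_self_eq μ e i e] at h
      rw [if_neg hik]
      linear_combination -h / 2
  have hβ : columnMoment μ e e e e e / 2 = ((Fintype.card n : ℂ) * (Fintype.card n + 1))⁻¹ := by
    have h := sum_columnMoment_self_self μ e
    rw [Finset.sum_congr rfl fun i _ => Finset.sum_congr rfl fun k _ => hpair i k] at h
    simp only [mul_add, mul_one, Finset.sum_add_distrib, mul_ite, mul_zero,
      Finset.sum_ite_eq, Finset.mem_univ, if_true, Finset.sum_const, Finset.card_univ,
      nsmul_eq_mul] at h
    exact eq_inv_of_mul_eq_one_left (by linear_combination h)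
  by_cases h₁ : i = j ∧ k = l
  · obtain ⟨rfl, rfl⟩ := h₁
    rw [hpair, hβ]
    by_cases hik : i = k <;> simp [hik]
  by_cases h₂ : i = l ∧ k = j
  · obtain ⟨rfl, rfl⟩ := h₂
    have hik : i ≠ k := fun h => h₁ ⟨h, h.symm⟩
    rw [columnMoment_comm_right, hpair, hβ]
    simp [hik, hik.symm]
  rw [columnMoment_eq_zero μ e h₁ h₂]
  simp only [not_and] at h₁ h₂
  split_ifs <;> simp_all

theorem integral_bilin_proj [IsProbabilityMeasure μ] [μ.IsMulLeftInvariant] (e : n)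
    (Φ : Matrix n n ℂ →ₗ[ℂ] Matrix n n ℂ →ₗ[ℂ] ℂ) :
    ∫ U, Φ (proj (unitaryColumn U e)) (proj (unitaryColumn U e)) ∂μ =
      ((Fintype.card n : ℂ) * (Fintype.card n + 1))⁻¹ *
        (Φ 1 1 + ∑ i, ∑ k, Φ (single i k 1) (single k i 1)) := by
  rw [integral_bilin_proj_eq_sum, ← sum_single_one]
  simp [columnMoment_eq μ e, map_sum, mul_add, add_mul, Finset.sum_add_distrib, ite_mul,
    Finset.mul_sum]
  rw [Finset.sum_comm]

end ColumnMoments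

section PartialTrace

variable {Dv Dh : ℕ}

local notation "N" => Fin Dv × Fin Dh

noncomputable def trHLinear : Matrix N N ℂ →ₗ[ℂ] Matrix (Fin Dv) (Fin Dv) ℂ where
  toFun := trH
  map_add' M M' := by ext; simp [trH, Finset.sum_add_distrib]
  map_smul' c M := by ext; simp [trH, Finset.mul_sum]

noncomputable def trHProductForm (A B C E : Matrix N N ℂ) :
    Matrix N N ℂ →ₗ[ℂ] Matrix N N ℂ →ₗ[ℂ] ℂ :=
  ((LinearMap.mul ℂ (Matrix (Fin Dv) (Fin Dv) ℂ)).compr₂ (traceLinearMap (Fin Dv) ℂ ℂ)).compl₁₂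
    (trHLinear ∘ₗ LinearMap.mulLeft ℂ A ∘ₗ LinearMap.mulRight ℂ B)
    (trHLinear ∘ₗ LinearMap.mulLeft ℂ C ∘ₗ LinearMap.mulRight ℂ E)

lemma trHProductForm_apply (A B C E X Y : Matrix N N ℂ) :
    trHProductForm A B C E X Y = (trH (A * X * B) * trH (C * Y * E)).trace := by
  simp [trHProductForm, trHLinear, mul_assoc]

lemma sum_trHProductForm_single (A B C E : Matrix N N ℂ) :
    ∑ i, ∑ k, trHProductForm A B C E (single i k 1) (single k i 1) =
      (trV (C * B) * trV (A * E)).trace := by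
  simp only [trHProductForm_apply, trH, mul_single_one_mul_apply]
  simp only [trace, diag_apply, mul_apply, trV, of_apply, Finset.sum_mul, Finset.mul_sum,
    ← Fintype.sum_prod_type']
  let σ : N × N × Fin Dv × Fin Dv × Fin Dh × Fin Dh ≃
      Fin Dh × Fin Dh × (Fin Dv × N) × Fin Dv × N :=
    ⟨fun x => (x.2.2.2.2.1, x.2.2.2.2.2, (x.2.2.1, x.1), x.2.2.2.1, x.2.1),
      fun y => (y.2.2.1.2, y.2.2.2.2, y.2.2.1.1, y.2.2.2.1, y.1, y.2.1), fun _ => rfl,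
      fun _ => rfl⟩
  apply Fintype.sum_equiv σ
  intro x
  simp only [σ, Equiv.coe_fn_mk]
  ring

end PartialTrace

theorem haar_average_partial_trace_products_general (Dv Dh : ℕ) (hv : 0 < Dv) (hh : 0 < Dh)
    (K : Matrix (Fin Dv × Fin Dh) (Fin Dv × Fin Dh) ℂ)
    (p₁ p₂ q₁ q₂ : ℕ)
    (μ : Measure (Matrix.unitaryGroup (Fin Dv × Fin Dh) ℂ)) [IsProbabilityMeasure μ]
    (hμ : ∀ V : Matrix.unitaryGroup (Fin Dv × Fin Dh) ℂ,
      Measure.map (fun U => V * U) μ = μ) :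
    ∫ U : Matrix.unitaryGroup (Fin Dv × Fin Dh) ℂ,
        ((trH (K ^ p₁ * proj (fun i =>
            (U : Matrix (Fin Dv × Fin Dh) (Fin Dv × Fin Dh) ℂ) i (⟨0, hv⟩, ⟨0, hh⟩)) * K ^ p₂)) *
          (trH (K ^ q₁ * proj (fun i =>
            (U : Matrix (Fin Dv × Fin Dh) (Fin Dv × Fin Dh) ℂ) i (⟨0, hv⟩, ⟨0, hh⟩)) * K ^ q₂))).trace
        ∂μ =
      (((Dv : ℂ) * (Dh : ℂ)) * ((Dv : ℂ) * (Dh : ℂ) + 1))⁻¹ *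
        (((trH (K ^ (p₁ + p₂))) * (trH (K ^ (q₁ + q₂)))).trace +
          ((trV (K ^ (q₁ + p₂))) * (trV (K ^ (p₁ + q₂)))).trace) := by
  have : μ.IsMulLeftInvariant := ⟨hμ⟩
  have h := integral_bilin_proj μ (⟨0, hv⟩, ⟨0, hh⟩)
    (trHProductForm (K ^ p₁) (K ^ p₂) (K ^ q₁) (K ^ q₂))
  rw [sum_trHProductForm_single] at h
  simp only [trHProductForm_apply, mul_one, ← pow_add, Fintype.card_prod, Fintype.card_fin,
    Nat.cast_mul] at h
  exact h

/-- Haar average of products of partial traces, Appendix A of the paper: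
for a Hermitian `K` on `ℂ^{Dv} ⊗ ℂ^{Dh}`, `D = Dv Dh`, and a Haar-random unit vector
`φ = U e₀`,
`E[Tr(Tr_h(K^{p₁}|φ⟩⟨φ|K^{p₂}) Tr_h(K^{q₁}|φ⟩⟨φ|K^{q₂}))]
  = (Tr(Tr_h K^{p₁+p₂} Tr_h K^{q₁+q₂}) + Tr(Tr_v K^{q₁+p₂} Tr_v K^{p₁+q₂})) / (D(D+1))`. -/
theorem haar_average_partial_trace_products (Dv Dh : ℕ) (hv : 0 < Dv) (hh : 0 < Dh)
    (K : Matrix (Fin Dv × Fin Dh) (Fin Dv × Fin Dh) ℂ) (hK : K.IsHermitian)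
    (p₁ p₂ q₁ q₂ : ℕ)
    (μ : Measure (Matrix.unitaryGroup (Fin Dv × Fin Dh) ℂ)) [IsProbabilityMeasure μ]
    (hμ : ∀ V : Matrix.unitaryGroup (Fin Dv × Fin Dh) ℂ,
      Measure.map (fun U => V * U) μ = μ) :
    ∫ U : Matrix.unitaryGroup (Fin Dv × Fin Dh) ℂ,
        ((trH (K ^ p₁ * proj (fun i =>
            (U : Matrix (Fin Dv × Fin Dh) (Fin Dv × Fin Dh) ℂ) i (⟨0, hv⟩, ⟨0, hh⟩)) * K ^ p₂)) *
          (trH (K ^ q₁ * proj (fun i =>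
            (U : Matrix (Fin Dv × Fin Dh) (Fin Dv × Fin Dh) ℂ) i (⟨0, hv⟩, ⟨0, hh⟩)) * K ^ q₂))).trace
        ∂μ =
      (((Dv : ℂ) * (Dh : ℂ)) * ((Dv : ℂ) * (Dh : ℂ) + 1))⁻¹ *
        (((trH (K ^ (p₁ + p₂))) * (trH (K ^ (q₁ + q₂)))).trace +
          ((trV (K ^ (q₁ + p₂))) * (trV (K ^ (p₁ + q₂)))).trace) :=
  haar_average_partial_trace_products_general Dv Dh hv hh K p₁ p₂ q₁ q₂ μ hμ
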